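/- arXiv:2111.00535 — 4 statements merged into one kernel-verified Lean document; each statement's English description precedes it below -/
import Mathlib

section
/- For all $x \in \mathbb{R}^n$ and all real numbers $a, b$ with $0 < a < b$, there is a constant $C$ depending only on $n$ such that $\int_{\mathbb{R}^n} (a+|x-y|)^{-n-1}(b+|y|)^{-n-1}\, dy \leq C a^{-1}(a+|x|)^{-n-1}$. -/
open MeasureTheory Metric

section aux

variable (n : ℕ)

local notation "E" => EuclideanSpace ℝ (Fin n)

lemma aux_integrable_unit (hn : 1 ≤ n) :
    Integrable (fun z : E => (1 + ‖z‖) ^ (-(n : ℝ) - 1)) := by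
  have : (-(n : ℝ) - 1) = -((n : ℝ) + 1) := by ring
  rw [this]
  apply integrable_one_add_norm
  rw [finrank_euclideanSpace_fin]
  linarith

lemma aux_key {a : ℝ} (ha : 0 < a) (y : E) :
    (a + ‖y‖) ^ (-(n : ℝ) - 1)
      = a ^ (-(n : ℝ) - 1) * (1 + ‖a⁻¹ • y‖) ^ (-(n : ℝ) - 1) := by
  have h : a + ‖y‖ = a * (1 + ‖a⁻¹ • y‖) := by
    rw [norm_smul, norm_inv, Real.norm_of_nonneg ha.le]
    field_simp
  rw [h, Real.mul_rpow ha.le (by positivity)]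

lemma aux_integrable (hn : 1 ≤ n) {a : ℝ} (ha : 0 < a) :
    Integrable (fun y : E => (a + ‖y‖) ^ (-(n : ℝ) - 1)) := by
  have := ((aux_integrable_unit n hn).comp_smul (R := a⁻¹)
    (inv_ne_zero ha.ne')).const_mul (a ^ (-(n : ℝ) - 1))
  refine this.congr (Filter.Eventually.of_forall fun y => ?_)
  exact (aux_key n ha y).symm

lemma aux_scaled (hn : 1 ≤ n) {a : ℝ} (ha : 0 < a) :
    ∫ y : E, (a + ‖y‖) ^ (-(n : ℝ) - 1)
      = a⁻¹ * ∫ z : E, (1 + ‖z‖) ^ (-(n : ℝ) - 1) := by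
  simp_rw [aux_key n ha]
  rw [integral_const_mul,
    Measure.integral_comp_inv_smul_of_nonneg volume
      (fun z : E => (1 + ‖z‖) ^ (-(n : ℝ) - 1)) ha.le,
    finrank_euclideanSpace_fin, smul_eq_mul, ← mul_assoc]
  congr 1
  rw [← Real.rpow_natCast a n, ← Real.rpow_add ha, ← Real.rpow_neg_one a]
  congr 1
  ring

lemma aux_cpos (hn : 1 ≤ n) :
    0 < ∫ z : E, (1 + ‖z‖) ^ (-(n : ℝ) - 1) := by
  rw [integral_pos_iff_support_of_nonneg (fun z => by positivity)
    (aux_integrable_unit n hn)]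
  have : Function.support (fun z : E => (1 + ‖z‖) ^ (-(n : ℝ) - 1)) = Set.univ := by
    ext z
    simp only [Function.mem_support, Set.mem_univ, iff_true]
    positivity
  rw [this]
  simpa using isOpen_univ.measure_pos (volume : Measure E) ⟨0, trivial⟩

lemma aux_ptwise (x y : E) {a b : ℝ} (ha : 0 < a) (hab : a < b) :
    (a + ‖x - y‖) ^ (-(n : ℝ) - 1) * (b + ‖y‖) ^ (-(n : ℝ) - 1)
      ≤ ((a + ‖x‖) / 2) ^ (-(n : ℝ) - 1) *
        ((a + ‖x - y‖) ^ (-(n : ℝ) - 1) + (a + ‖y‖) ^ (-(n : ℝ) - 1)) := by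
  set e : ℝ := -(n : ℝ) - 1 with he
  have hepos : e ≤ 0 := by
    have : (0:ℝ) ≤ n := Nat.cast_nonneg n
    simp only [he]; linarith
  have hM : 0 < (a + ‖x‖) / 2 := by positivity
  have hxy : ‖x‖ ≤ ‖x - y‖ + ‖y‖ := by
    calc ‖x‖ = ‖x - y + y‖ := by rw [sub_add_cancel]
    _ ≤ ‖x - y‖ + ‖y‖ := norm_add_le _ _
  have hcase : (a + ‖x‖) / 2 ≤ a + ‖x - y‖ ∨ (a + ‖x‖) / 2 ≤ a + ‖y‖ := by
    by_contra h
    push_neg at h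
    have := norm_nonneg (x - y)
    have := norm_nonneg y
    linarith [h.1, h.2]
  have hb0 : 0 < b + ‖y‖ := by have := norm_nonneg y; linarith
  have hb : (b + ‖y‖) ^ e ≤ (a + ‖y‖) ^ e :=
    Real.rpow_le_rpow_of_nonpos (by positivity) (by linarith) hepos
  have p1 : (0:ℝ) < (a + ‖x - y‖) ^ e := Real.rpow_pos_of_pos (by positivity) e
  have p2 : (0:ℝ) < (a + ‖y‖) ^ e := Real.rpow_pos_of_pos (by positivity) e
  have p3 : (0:ℝ) < (b + ‖y‖) ^ e := Real.rpow_pos_of_pos hb0 e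
  have pM : (0:ℝ) < ((a + ‖x‖) / 2) ^ e := Real.rpow_pos_of_pos hM e
  rcases hcase with hc | hc
  · have h1 : (a + ‖x - y‖) ^ e ≤ ((a + ‖x‖) / 2) ^ e :=
      Real.rpow_le_rpow_of_nonpos hM hc hepos
    nlinarith [mul_le_mul h1 hb p3.le pM.le, mul_pos pM p1]
  · have h1 : (a + ‖y‖) ^ e ≤ ((a + ‖x‖) / 2) ^ e :=
      Real.rpow_le_rpow_of_nonpos hM hc hepos
    have h2 : (b + ‖y‖) ^ e ≤ ((a + ‖x‖) / 2) ^ e := le_trans hb h1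
    nlinarith [mul_le_mul p1.le h2 p3.le p1.le, mul_pos pM p2]

end aux

/-- Convolution-type estimate: for `0 < a < b`,
`∫ (a+|x-y|)^{-n-1} (b+|y|)^{-n-1} dy ≤ C a⁻¹ (a+|x|)^{-n-1}`,
with `C` depending only on the dimension `n`. -/
theorem stmt_0 (n : ℕ) (hn : 1 ≤ n) :
    ∃ C : ℝ, 0 < C ∧
      ∀ (x : EuclideanSpace ℝ (Fin n)) (a b : ℝ), 0 < a → a < b →
        ∫ y : EuclideanSpace ℝ (Fin n),
            (a + ‖x - y‖) ^ (-(n : ℝ) - 1) * (b + ‖y‖) ^ (-(n : ℝ) - 1)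
          ≤ C * a⁻¹ * (a + ‖x‖) ^ (-(n : ℝ) - 1) := by
  set cn : ℝ := ∫ z : EuclideanSpace ℝ (Fin n), (1 + ‖z‖) ^ (-(n : ℝ) - 1) with hcn
  have hcpos : 0 < cn := aux_cpos n hn
  refine ⟨2 ^ ((n : ℝ) + 1) * 2 * cn, by positivity, ?_⟩
  intro x a b ha hab
  set e : ℝ := -(n : ℝ) - 1 with he
  have hInt2 : Integrable (fun y : EuclideanSpace ℝ (Fin n) => (a + ‖y‖) ^ e) :=
    aux_integrable n hn ha
  have hInt1 : Integrable (fun y : EuclideanSpace ℝ (Fin n) => (a + ‖x - y‖) ^ e) :=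
    hInt2.comp_sub_left x
  have hI1 : ∫ y : EuclideanSpace ℝ (Fin n), (a + ‖x - y‖) ^ e = a⁻¹ * cn := by
    rw [integral_sub_left_eq_self (fun y : EuclideanSpace ℝ (Fin n) => (a + ‖y‖) ^ e) volume x]
    exact aux_scaled n hn ha
  have hI2 : ∫ y : EuclideanSpace ℝ (Fin n), (a + ‖y‖) ^ e = a⁻¹ * cn :=
    aux_scaled n hn ha
  have hMe : ((a + ‖x‖) / 2) ^ e = 2 ^ ((n : ℝ) + 1) * (a + ‖x‖) ^ e := by
    rw [Real.div_rpow (by positivity) (by norm_num)]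
    have h2 : (2:ℝ) ^ e = (2 ^ ((n : ℝ) + 1))⁻¹ := by
      rw [he, show -(n : ℝ) - 1 = -((n : ℝ) + 1) by ring, Real.rpow_neg (by norm_num)]
    rw [h2]
    field_simp
  calc ∫ y : EuclideanSpace ℝ (Fin n), (a + ‖x - y‖) ^ e * (b + ‖y‖) ^ e
      ≤ ∫ y : EuclideanSpace ℝ (Fin n),
          ((a + ‖x‖) / 2) ^ e * ((a + ‖x - y‖) ^ e + (a + ‖y‖) ^ e) := by
        apply integral_mono_of_nonneg
        · refine Filter.Eventually.of_forall fun y => mul_nonneg ?_ ?_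
          · exact Real.rpow_nonneg (by positivity) _
          · exact Real.rpow_nonneg (by have := norm_nonneg y; linarith) _
        · exact ((hInt1.add hInt2).const_mul _)
        · exact Filter.Eventually.of_forall fun y => aux_ptwise n x y ha hab
    _ = ((a + ‖x‖) / 2) ^ e * (a⁻¹ * cn + a⁻¹ * cn) := by
        rw [integral_const_mul, integral_add hInt1 hInt2, hI1, hI2]
    _ = 2 ^ ((n : ℝ) + 1) * 2 * cn * a⁻¹ * (a + ‖x‖) ^ e := by
        rw [hMe]; ring
end

section
/- For every $\delta > 1/2$ there exists a constant $C = C(\delta) > 0$ such that for all multiindices $\alpha \in \mathbb{N}_0^n$, $\sum_{\gamma \leq \alpha} \binom{\alpha}{\gamma} |\gamma|^{|\gamma|-\delta} |\alpha-\gamma|^{|\alpha-\gamma|-\delta} \leq C |\alpha|^{|\alpha|-\delta}$. -/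
set_option maxHeartbeats 1000000

open Finset

/-- The weight `|γ|^{|γ|-δ}`, with the convention `0^{0-δ} = 1`. -/
noncomputable def miWeight (δ : ℝ) (m : ℕ) : ℝ :=
  if m = 0 then 1 else (m : ℝ) ^ ((m : ℝ) - δ)

/-- Degree of a multiindex. -/
def miDeg {n : ℕ} (α : Fin n → ℕ) : ℕ := ∑ i, α i

/-- Multiindex binomial coefficient. -/
def miChoose {n : ℕ} (α γ : Fin n → ℕ) : ℕ := ∏ i, (α i).choose (γ i)

open Polynomial in
lemma vandermonde_fiber {n : ℕ} (α : Fin n → ℕ) (k : ℕ) :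
    ∑ γ ∈ (Finset.Iic α).filter (fun γ => miDeg γ = k), miChoose α γ
      = (miDeg α).choose k := by
  have hIic : (Finset.Iic α) = Fintype.piFinset fun i => Finset.Iic (α i) := by
    ext γ; simp [Fintype.mem_piFinset, Pi.le_def]
  have hP : (∑ γ ∈ Finset.Iic α, (C (miChoose α γ) * X ^ (miDeg γ)) : Polynomial ℕ)
      = (X + 1) ^ (miDeg α) := by
    rw [hIic]
    have hr : ∀ i : Fin n, Finset.Iic (α i) = Finset.range (α i + 1) := by
      intro i; ext j; simp [Nat.lt_succ_iff]
    calc ∑ γ ∈ Fintype.piFinset (fun i => Finset.Iic (α i)),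
            (C (miChoose α γ) * X ^ (miDeg γ) : Polynomial ℕ)
        = ∑ γ ∈ Fintype.piFinset (fun i => Finset.Iic (α i)),
            ∏ i, (X ^ (γ i) * C ((α i).choose (γ i))) := by
          refine Finset.sum_congr rfl fun γ _ => ?_
          rw [Finset.prod_mul_distrib, Finset.prod_pow_eq_pow_sum]
          rw [miChoose, miDeg, map_prod, mul_comm]
      _ = ∏ i, ∑ j ∈ Finset.Iic (α i), (X ^ j * C ((α i).choose j)) :=
          (Finset.prod_univ_sum (fun i => Finset.Iic (α i))
            (fun i j => (X ^ j * C ((α i).choose j) : Polynomial ℕ))).symm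
      _ = ∏ i, ((X + 1) ^ (α i) : Polynomial ℕ) := by
          refine Finset.prod_congr rfl fun i _ => ?_
          rw [hr i, add_pow]
          simp [C_eq_natCast]
      _ = (X + 1) ^ (miDeg α) := by rw [miDeg, Finset.prod_pow_eq_pow_sum]
  have h2 := congrArg (fun p => Polynomial.coeff p k) hP
  simp only [finset_sum_coeff, coeff_C_mul, coeff_X_pow, coeff_X_add_one_pow,
    Nat.cast_id, mul_ite, mul_one, mul_zero] at h2
  rw [← h2, Finset.sum_filter]
  refine Finset.sum_congr rfl fun γ _ => ?_
  by_cases h : miDeg γ = k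
  · simp [h]
  · rw [if_neg h, if_neg (fun h' : k = miDeg γ => h h'.symm)]

section Aux
open Stirling Real Nat

lemma stirling_lb (j : ℕ) : Real.sqrt π ≤ stirlingSeq (j + 1) :=
  haveI h : Filter.Tendsto (stirlingSeq ∘ Nat.succ) Filter.atTop (nhds (Real.sqrt π)) :=
    tendsto_stirlingSeq_sqrt_pi.comp (Filter.tendsto_add_atTop_nat 1)
  stirlingSeq'_antitone.le_of_tendsto h j

lemma stirling_ub (j : ℕ) : stirlingSeq (j + 1) ≤ stirlingSeq 1 :=
  stirlingSeq'_antitone (Nat.zero_le j)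

lemma fac_lb (j : ℕ) (hj : j ≠ 0) :
    Real.sqrt π * (Real.sqrt (2 * j) * ((j / Real.exp 1) ^ j)) ≤ (j ! : ℝ) := by
  obtain ⟨i, rfl⟩ := Nat.exists_eq_succ_of_ne_zero hj
  have h := stirling_lb i
  rw [stirlingSeq] at h
  have hden : 0 < Real.sqrt (2 * (i + 1 : ℕ)) * (((i + 1 : ℕ) : ℝ) / Real.exp 1) ^ (i + 1) := by
    have : (0:ℝ) < ((i+1 : ℕ):ℝ) := by positivity
    positivity
  calc Real.sqrt π * (Real.sqrt (2 * (i+1:ℕ)) * (((i+1:ℕ):ℝ) / Real.exp 1) ^ (i+1))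
      ≤ (((i+1:ℕ)! : ℝ) / (Real.sqrt (2 * (i+1:ℕ)) * (((i+1:ℕ):ℝ) / Real.exp 1) ^ (i+1)))
        * (Real.sqrt (2 * (i+1:ℕ)) * (((i+1:ℕ):ℝ) / Real.exp 1) ^ (i+1)) := by
        exact mul_le_mul_of_nonneg_right h hden.le
    _ = ((i+1:ℕ)! : ℝ) := div_mul_cancel₀ _ hden.ne'

lemma fac_ub (j : ℕ) (hj : j ≠ 0) :
    (j ! : ℝ) ≤ stirlingSeq 1 * (Real.sqrt (2 * j) * ((j / Real.exp 1) ^ j)) := by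
  obtain ⟨i, rfl⟩ := Nat.exists_eq_succ_of_ne_zero hj
  have h := stirling_ub i
  rw [stirlingSeq] at h
  have hden : 0 < Real.sqrt (2 * (i + 1 : ℕ)) * (((i + 1 : ℕ) : ℝ) / Real.exp 1) ^ (i + 1) := by
    have : (0:ℝ) < ((i+1 : ℕ):ℝ) := by positivity
    positivity
  calc ((i+1:ℕ)! : ℝ)
      = (((i+1:ℕ)! : ℝ) / (Real.sqrt (2 * (i+1:ℕ)) * (((i+1:ℕ):ℝ) / Real.exp 1) ^ (i+1)))
        * (Real.sqrt (2 * (i+1:ℕ)) * (((i+1:ℕ):ℝ) / Real.exp 1) ^ (i+1)) :=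
        (div_mul_cancel₀ _ hden.ne').symm
    _ ≤ stirlingSeq 1 * (Real.sqrt (2 * (i+1:ℕ)) * (((i+1:ℕ):ℝ) / Real.exp 1) ^ (i+1)) :=
        mul_le_mul_of_nonneg_right h hden.le

lemma choose_bound : ∃ A : ℝ, 0 < A ∧ ∀ k j : ℕ, k ≠ 0 → j ≠ 0 →
    (((k + j).choose k : ℝ)) * ((Real.sqrt k * (k : ℝ) ^ k) * (Real.sqrt j * (j : ℝ) ^ j))
      ≤ A * (Real.sqrt (k + j : ℕ) * (((k + j : ℕ) : ℝ) ^ (k + j))) := by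
  have hU : 0 < stirlingSeq 1 := stirlingSeq'_pos 0
  refine ⟨stirlingSeq 1 * Real.sqrt 2 / (2 * π), by positivity, fun k j hk hj => ?_⟩
  have hk0 : (0:ℝ) < k := by positivity
  have hj0 : (0:ℝ) < j := by positivity
  have hm0 : (0:ℝ) < ((k + j : ℕ) : ℝ) := by positivity
  have hE : (0:ℝ) < Real.exp 1 := Real.exp_pos 1
  have hc : (((k+j).choose k : ℝ)) * (k ! : ℝ) * (j ! : ℝ) = ((k+j)! : ℝ) := by
    have h := Nat.choose_mul_factorial_mul_factorial (Nat.le_add_right k j)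
    rw [Nat.add_sub_cancel_left] at h
    exact_mod_cast congrArg (Nat.cast : ℕ → ℝ) h
  have h1 := fac_lb k hk
  have h2 := fac_lb j hj
  have h3 := fac_ub (k + j) (by omega)
  have hcnn : (0:ℝ) ≤ ((k+j).choose k : ℝ) := by positivity
  have key : (((k+j).choose k : ℝ)) * (Real.sqrt π * (Real.sqrt (2*k) * (((k:ℝ)) / Real.exp 1) ^ k))
      * (Real.sqrt π * (Real.sqrt (2*j) * (((j:ℝ)) / Real.exp 1) ^ j))
      ≤ stirlingSeq 1 * (Real.sqrt (2 * (k+j:ℕ)) * ((((k+j:ℕ):ℝ)) / Real.exp 1) ^ (k+j)) := by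
    calc _ ≤ (((k+j).choose k : ℝ)) * (k ! : ℝ) * (j ! : ℝ) := by
          apply mul_le_mul
          · exact mul_le_mul_of_nonneg_left h1 hcnn
          · exact h2
          · positivity
          · positivity
      _ = ((k+j)! : ℝ) := hc
      _ ≤ _ := h3
  -- rewrite and massage
  have e1 : Real.sqrt (2 * k) = Real.sqrt 2 * Real.sqrt k := Real.sqrt_mul (by norm_num) _
  have e2 : Real.sqrt (2 * j) = Real.sqrt 2 * Real.sqrt j := Real.sqrt_mul (by norm_num) _
  have e3 : Real.sqrt (2 * (k+j:ℕ)) = Real.sqrt 2 * Real.sqrt (k+j:ℕ) := Real.sqrt_mul (by norm_num) _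
  have e4 : ((k:ℝ) / Real.exp 1) ^ k = (k:ℝ)^k / (Real.exp 1)^k := div_pow _ _ _
  have e5 : ((j:ℝ) / Real.exp 1) ^ j = (j:ℝ)^j / (Real.exp 1)^j := div_pow _ _ _
  have e6 : (((k+j:ℕ):ℝ) / Real.exp 1) ^ (k+j) = ((k+j:ℕ):ℝ)^(k+j) / (Real.exp 1)^(k+j) :=
    div_pow _ _ _
  have e7 : Real.sqrt π * Real.sqrt π = π := Real.mul_self_sqrt Real.pi_pos.le
  rw [e1, e2, e3, e4, e5, e6] at key
  have hEk : (0:ℝ) < (Real.exp 1)^(k+j) := by positivity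
  have hpi : (0:ℝ) < π := Real.pi_pos
  have h2' : (0:ℝ) < Real.sqrt 2 := by positivity
  set SP := Real.sqrt π with hSP
  set S2 := Real.sqrt 2 with hS2
  have e7' : SP * SP = π := Real.mul_self_sqrt Real.pi_pos.le
  have hsq2 : S2 * S2 = 2 := Real.mul_self_sqrt (by norm_num)
  have hEkj : (Real.exp 1)^k * (Real.exp 1)^j = (Real.exp 1)^(k+j) := (pow_add _ k j).symm
  set X := (((k+j).choose k : ℝ)) * ((Real.sqrt k * (k:ℝ)^k) * (Real.sqrt j * (j:ℝ)^j)) with hX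
  set Y := Real.sqrt ((k+j : ℕ)) * (((k+j:ℕ):ℝ))^(k+j) with hY
  have key2 : X * (2*π) / (Real.exp 1)^(k+j) ≤ stirlingSeq 1 * S2 * Y / (Real.exp 1)^(k+j) := by
    have l1 : X * (2*π) / (Real.exp 1)^(k+j)
        = (((k+j).choose k : ℝ)) * (SP * (S2 * Real.sqrt k * ((k:ℝ)^k / (Real.exp 1)^k)))
          * (SP * (S2 * Real.sqrt j * ((j:ℝ)^j / (Real.exp 1)^j))) := by
      rw [hX, ← e7', ← hsq2, ← hEkj]
      ring
    have l2 : stirlingSeq 1 * S2 * Y / (Real.exp 1)^(k+j)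
        = stirlingSeq 1 * (S2 * Real.sqrt ((k+j:ℕ)) * ((((k+j:ℕ):ℝ))^(k+j) / (Real.exp 1)^(k+j))) := by
      rw [hY]; ring
    rw [l1, l2]; exact key
  have key3 : X * (2*π) ≤ stirlingSeq 1 * S2 * Y := by
    have h := mul_le_mul_of_nonneg_right key2 hEk.le
    rwa [div_mul_cancel₀ _ hEk.ne', div_mul_cancel₀ _ hEk.ne'] at h
  rw [div_mul_eq_mul_div, le_div_iff₀ (by positivity)]
  linarith [key3]

lemma tail_bound (s : ℝ) (hs : 1 < s) : ∃ B : ℝ, 0 < B ∧ ∀ m : ℕ,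
    ∑ k ∈ Finset.Ico 1 m, (k : ℝ) ^ (-s) * (((m - k : ℕ) : ℝ)) ^ (-s)
      ≤ B * (m : ℝ) ^ (-s) := by
  have hsum : Summable (fun n : ℕ => (n : ℝ) ^ (-s)) :=
    Real.summable_nat_rpow.mpr (by linarith)
  set Z := ∑' n : ℕ, (n : ℝ) ^ (-s) with hZ
  have hZ0 : 0 ≤ Z := tsum_nonneg fun n => Real.rpow_nonneg (Nat.cast_nonneg n) _
  refine ⟨(2:ℝ)^s * (2 * Z) + 1, by positivity, fun m => ?_⟩
  rcases Nat.lt_or_ge m 2 with hm | hm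
  · interval_cases m <;> simp <;> positivity
  have hm0 : (0:ℝ) < m := by positivity
  have hpt : ∀ k ∈ Finset.Ico 1 m,
      (k : ℝ) ^ (-s) * (((m - k : ℕ) : ℝ)) ^ (-s)
        ≤ (2:ℝ)^s * (m:ℝ)^(-s) * ((k : ℝ) ^ (-s) + (((m - k : ℕ) : ℝ)) ^ (-s)) := by
    intro k hk
    rw [Finset.mem_Ico] at hk
    have hk1 : 1 ≤ k := hk.1
    have hkm : k < m := hk.2
    have hk0 : (0:ℝ) < k := by exact_mod_cast hk1
    have hj0 : (0:ℝ) < ((m - k : ℕ) : ℝ) := by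
      have : 1 ≤ m - k := by omega
      exact_mod_cast this
    have hhalf : ((m:ℝ)/2)^(-s) = (2:ℝ)^s * (m:ℝ)^(-s) := by
      rw [Real.div_rpow hm0.le (by norm_num), Real.rpow_neg (by norm_num : (0:ℝ) ≤ 2)]
      rw [div_eq_mul_inv, inv_inv, mul_comm]
    have hknn : 0 ≤ (k:ℝ)^(-s) := Real.rpow_nonneg hk0.le _
    have hjnn : 0 ≤ ((m-k:ℕ):ℝ)^(-s) := Real.rpow_nonneg hj0.le _
    have hmnn : 0 ≤ (2:ℝ)^s * (m:ℝ)^(-s) := by positivity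
    rcases le_or_gt (2*k) m with h | h
    · -- m - k ≥ m/2
      have h1 : (m:ℝ)/2 ≤ ((m-k:ℕ):ℝ) := by
        have : m ≤ 2 * (m - k) := by omega
        have := (Nat.cast_le (α := ℝ)).mpr this
        push_cast at this ⊢
        linarith
      have h2 : ((m-k:ℕ):ℝ)^(-s) ≤ ((m:ℝ)/2)^(-s) :=
        Real.rpow_le_rpow_of_nonpos (by positivity) h1 (by linarith)
      calc (k : ℝ) ^ (-s) * (((m - k : ℕ) : ℝ)) ^ (-s)
          ≤ (k : ℝ) ^ (-s) * ((2:ℝ)^s * (m:ℝ)^(-s)) := by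
            rw [← hhalf]; exact mul_le_mul_of_nonneg_left h2 hknn
        _ = (2:ℝ)^s * (m:ℝ)^(-s) * (k:ℝ)^(-s) := by ring
        _ ≤ _ := by nlinarith
    · -- k > m/2
      have h1 : (m:ℝ)/2 ≤ (k:ℝ) := by
        have : m ≤ 2 * k := by omega
        have := (Nat.cast_le (α := ℝ)).mpr this
        push_cast at this ⊢
        linarith
      have h2 : (k:ℝ)^(-s) ≤ ((m:ℝ)/2)^(-s) :=
        Real.rpow_le_rpow_of_nonpos (by positivity) h1 (by linarith)
      calc (k : ℝ) ^ (-s) * (((m - k : ℕ) : ℝ)) ^ (-s)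
          ≤ ((2:ℝ)^s * (m:ℝ)^(-s)) * ((m-k:ℕ):ℝ)^(-s) := by
            rw [← hhalf]; exact mul_le_mul_of_nonneg_right h2 hjnn
        _ ≤ _ := by nlinarith
  have hS1 : ∑ k ∈ Finset.Ico 1 m, (k : ℝ) ^ (-s) ≤ Z :=
    Summable.sum_le_tsum _ (fun i _ => Real.rpow_nonneg (Nat.cast_nonneg i) _) hsum
  have hS2 : ∑ k ∈ Finset.Ico 1 m, (((m - k : ℕ) : ℝ)) ^ (-s)
      = ∑ k ∈ Finset.Ico 1 m, (k : ℝ) ^ (-s) := by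
    refine Finset.sum_nbij' (fun k => m - k) (fun k => m - k) ?_ ?_ ?_ ?_ ?_ <;>
      intro a ha <;> simp only [Finset.mem_Ico] at ha ⊢ <;> omega
  calc ∑ k ∈ Finset.Ico 1 m, (k : ℝ) ^ (-s) * (((m - k : ℕ) : ℝ)) ^ (-s)
      ≤ ∑ k ∈ Finset.Ico 1 m,
          (2:ℝ)^s * (m:ℝ)^(-s) * ((k : ℝ) ^ (-s) + (((m - k : ℕ) : ℝ)) ^ (-s)) :=
        Finset.sum_le_sum hpt
    _ = (2:ℝ)^s * (m:ℝ)^(-s) *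
          ((∑ k ∈ Finset.Ico 1 m, (k : ℝ) ^ (-s)) +
           (∑ k ∈ Finset.Ico 1 m, (((m - k : ℕ) : ℝ)) ^ (-s))) := by
        rw [← Finset.mul_sum, Finset.sum_add_distrib]
    _ ≤ (2:ℝ)^s * (m:ℝ)^(-s) * (Z + Z) := by
        have hmn : 0 ≤ (2:ℝ)^s * (m:ℝ)^(-s) := by positivity
        apply mul_le_mul_of_nonneg_left _ hmn
        rw [hS2]; linarith
    _ = (2:ℝ)^s * (2 * Z) * (m:ℝ)^(-s) := by ring
    _ ≤ ((2:ℝ)^s * (2 * Z) + 1) * (m:ℝ)^(-s) := by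
        have : (0:ℝ) ≤ (m:ℝ)^(-s) := Real.rpow_nonneg hm0.le _
        nlinarith

lemma weight_split (δ : ℝ) (k : ℕ) (hk : k ≠ 0) :
    miWeight δ k = (Real.sqrt k * (k : ℝ) ^ k) * (k : ℝ) ^ (-(δ + 1/2)) := by
  have hk0 : (0:ℝ) < k := by positivity
  rw [miWeight, if_neg hk, Real.sqrt_eq_rpow, ← Real.rpow_natCast (k:ℝ) k,
    ← Real.rpow_add hk0, ← Real.rpow_add hk0]
  ring_nf

lemma key_ineq (δ : ℝ) (hδ : 1/2 < δ) : ∃ C : ℝ, 0 < C ∧ ∀ m : ℕ,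
    ∑ k ∈ Finset.range (m + 1), (m.choose k : ℝ) * miWeight δ k * miWeight δ (m - k)
      ≤ C * miWeight δ m := by
  obtain ⟨A, hA, hAch⟩ := choose_bound
  obtain ⟨B, hB, hBt⟩ := tail_bound (δ + 1/2) (by linarith)
  refine ⟨2 + A * B, by positivity, fun m => ?_⟩
  rcases Nat.eq_zero_or_pos m with rfl | hm
  · have h1 : (0:ℝ) ≤ A * B := by positivity
    simp only [miWeight]
    norm_num
    linarith
  have hm' : m ≠ 0 := by omega
  set f : ℕ → ℝ := fun k => (m.choose k : ℝ) * miWeight δ k * miWeight δ (m - k) with hf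
  have hsplit : ∑ k ∈ Finset.range (m + 1), f k
      = f 0 + (∑ k ∈ Finset.Ico 1 m, f k) + f m := by
    rw [Finset.sum_range_succ, Finset.range_eq_Ico, Finset.sum_eq_sum_Ico_succ_bot hm]
  have hf0 : f 0 = miWeight δ m := by
    simp [hf, miWeight]
  have hfm : f m = miWeight δ m := by
    simp [hf, miWeight, Nat.sub_self]
  have hmid : ∑ k ∈ Finset.Ico 1 m, f k ≤ A * B * miWeight δ m := by
    have hterm : ∀ k ∈ Finset.Ico 1 m, f k
        ≤ (A * (Real.sqrt m * (m:ℝ)^m)) *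
            ((k : ℝ) ^ (-(δ + 1/2)) * (((m - k : ℕ) : ℝ)) ^ (-(δ + 1/2))) := by
      intro k hk
      rw [Finset.mem_Ico] at hk
      have hk1 : k ≠ 0 := by omega
      have hj1 : m - k ≠ 0 := by omega
      have hkj : k + (m - k) = m := by omega
      have hch := hAch k (m - k) hk1 hj1
      rw [hkj] at hch
      simp only [hf]
      rw [weight_split δ k hk1, weight_split δ (m - k) hj1]
      have hknn : (0:ℝ) ≤ (k:ℝ)^(-(δ+1/2)) := Real.rpow_nonneg (Nat.cast_nonneg k) _
      have hjnn : (0:ℝ) ≤ ((m-k:ℕ):ℝ)^(-(δ+1/2)) := Real.rpow_nonneg (Nat.cast_nonneg _) _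
      calc (m.choose k : ℝ) * ((Real.sqrt k * (k:ℝ)^k) * (k:ℝ)^(-(δ+1/2)))
            * ((Real.sqrt (m-k:ℕ) * ((m-k:ℕ):ℝ)^(m-k)) * ((m-k:ℕ):ℝ)^(-(δ+1/2)))
          = ((m.choose k : ℝ) * ((Real.sqrt k * (k:ℝ)^k) * (Real.sqrt (m-k:ℕ) * ((m-k:ℕ):ℝ)^(m-k))))
            * ((k:ℝ)^(-(δ+1/2)) * ((m-k:ℕ):ℝ)^(-(δ+1/2))) := by ring
        _ ≤ (A * (Real.sqrt m * (m:ℝ)^m)) *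
            ((k:ℝ)^(-(δ+1/2)) * ((m-k:ℕ):ℝ)^(-(δ+1/2))) := by
            apply mul_le_mul_of_nonneg_right _ (by positivity)
            exact hch
    calc ∑ k ∈ Finset.Ico 1 m, f k
        ≤ ∑ k ∈ Finset.Ico 1 m, (A * (Real.sqrt m * (m:ℝ)^m)) *
            ((k : ℝ) ^ (-(δ + 1/2)) * (((m - k : ℕ) : ℝ)) ^ (-(δ + 1/2))) :=
          Finset.sum_le_sum hterm
      _ = (A * (Real.sqrt m * (m:ℝ)^m)) *
            ∑ k ∈ Finset.Ico 1 m, (k : ℝ) ^ (-(δ + 1/2)) * (((m - k : ℕ) : ℝ)) ^ (-(δ + 1/2)) :=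
          (Finset.mul_sum _ _ _).symm
      _ ≤ (A * (Real.sqrt m * (m:ℝ)^m)) * (B * (m:ℝ)^(-(δ+1/2))) := by
          apply mul_le_mul_of_nonneg_left (hBt m) (by positivity)
      _ = A * B * ((Real.sqrt m * (m:ℝ)^m) * (m:ℝ)^(-(δ+1/2))) := by ring
      _ = A * B * miWeight δ m := by rw [← weight_split δ m hm']
  linarith [hsplit ▸ le_refl (∑ k ∈ Finset.range (m+1), f k), hmid]

end Aux

lemma deg_sub {n : ℕ} {α γ : Fin n → ℕ} (h : γ ≤ α) :
    miDeg (α - γ) = miDeg α - miDeg γ := by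
  unfold miDeg
  exact Finset.sum_tsub_distrib _ fun i _ => h i

lemma reduce {n : ℕ} (α : Fin n → ℕ) (g : ℕ → ℝ) :
    ∑ γ ∈ Finset.Iic α, (miChoose α γ : ℝ) * g (miDeg γ)
      = ∑ k ∈ Finset.range (miDeg α + 1), ((miDeg α).choose k : ℝ) * g k := by
  rw [← Finset.sum_fiberwise_of_maps_to (g := fun γ => miDeg γ)
    (t := Finset.range (miDeg α + 1)) (fun γ hγ => ?_)]
  · refine Finset.sum_congr rfl fun k _ => ?_
    calc ∑ γ ∈ (Finset.Iic α).filter (fun γ => miDeg γ = k), (miChoose α γ : ℝ) * g (miDeg γ)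
        = ∑ γ ∈ (Finset.Iic α).filter (fun γ => miDeg γ = k), (miChoose α γ : ℝ) * g k := by
          refine Finset.sum_congr rfl fun γ hγ => ?_
          rw [(Finset.mem_filter.mp hγ).2]
      _ = (((miDeg α).choose k : ℕ) : ℝ) * g k := by
          rw [← Finset.sum_mul, ← Nat.cast_sum, vandermonde_fiber]
  · rw [Finset.mem_range, Nat.lt_succ_iff]
    exact Finset.sum_le_sum fun i _ => (Finset.mem_Iic.mp hγ) i


/-- Combinatorial lemma: for `δ > 1/2` there is `C = C(δ)` with
`∑_{γ ≤ α} (α choose γ) |γ|^{|γ|-δ} |α-γ|^{|α-γ|-δ} ≤ C |α|^{|α|-δ}`. -/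
theorem stmt_1 (n : ℕ) (hn : 1 ≤ n) (δ : ℝ) (hδ : 1/2 < δ) :
    ∃ C : ℝ, 0 < C ∧
      ∀ α : Fin n → ℕ,
        ∑ γ ∈ Finset.Iic α,
            (miChoose α γ : ℝ) * miWeight δ (miDeg γ) * miWeight δ (miDeg (α - γ))
          ≤ C * miWeight δ (miDeg α) := by
  obtain ⟨C, hC, hkey⟩ := key_ineq δ hδ
  refine ⟨C, hC, fun α => ?_⟩
  have hcong : ∑ γ ∈ Finset.Iic α,
        (miChoose α γ : ℝ) * miWeight δ (miDeg γ) * miWeight δ (miDeg (α - γ))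
      = ∑ γ ∈ Finset.Iic α,
        (miChoose α γ : ℝ) * (miWeight δ (miDeg γ) * miWeight δ (miDeg α - miDeg γ)) := by
    refine Finset.sum_congr rfl fun γ hγ => ?_
    rw [deg_sub (Finset.mem_Iic.mp hγ)]
    ring
  rw [hcong, reduce α (fun k => miWeight δ k * miWeight δ (miDeg α - k))]
  calc ∑ k ∈ Finset.range (miDeg α + 1),
        ((miDeg α).choose k : ℝ) * (miWeight δ k * miWeight δ (miDeg α - k))
      = ∑ k ∈ Finset.range (miDeg α + 1),
        ((miDeg α).choose k : ℝ) * miWeight δ k * miWeight δ (miDeg α - k) := by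
        refine Finset.sum_congr rfl fun k _ => by ring
    _ ≤ C * miWeight δ (miDeg α) := hkey (miDeg α)
end

section
/- Let $K : \mathbb{R}^n \times (0,1] \to \mathbb{R}$ satisfy $|K(x,t)| \leq C(t^{1/(2\alpha)}+|x|)^{-(n+1)}$, and let $f : \mathbb{R}^n \times [0,1] \to \mathbb{R}$ be bounded and supported outside $B(0,2) \times [0,1]$ in space, i.e., $f(y,s) = 0$ for $|y| < 2$. Then for all $(x_0, t_0) \in B(0,1) \times (0,1]$, $\big| \int_0^{t_0} \int_{\mathbb{R}^n} K(x_0 - y, t_0 - s) f(y,s)\, dy\, ds \big| \leq C' \sup_{x \in \mathbb{R}^n} \int_0^1 \int_{B(x,1)} |f(y,s)|\, dy\, ds$, where $C'$ depends only on $n$, $\alpha$, and $C$. -/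
/-!
For `‖y‖ ≥ 2` and `‖x₀‖ < 1` the kernel is bounded by `C ‖x₀ - y‖^{-(n+1)}`, and on the unit ball
around `y` this is at most `3^{n+1}` times the integrable weight `w x = (1 + ‖x - x₀‖)^{-(n+1)}`.
Hence `|K(x₀ - y, t)|` is at most `C 3^{n+1} / |B(0,1)|` times the integral of `w` over `B(y, 1)`.
Since `x ∈ B(y, 1) ↔ y ∈ B(x, 1)`, Tonelli turns the resulting bound for the convolution into
`∫ w(x) (∫∫_{(0,t₀) × B(x,1)} |f|) dx`, and each cylinder integral is at most the supremum.
-/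

open MeasureTheory Real Metric intervalIntegral

open scoped ENNReal

section BallSwap

variable {X T : Type*} [PseudoMetricSpace X] [SecondCountableTopology X] [MeasurableSpace X]
  [BorelSpace X] [MeasurableSpace T] {μ : Measure X} [SFinite μ] {r : ℝ}

theorem measurable_setLIntegral_ball {F : X → T → ℝ≥0∞} (hF : Measurable (Function.uncurry F)) :
    Measurable fun q : T × X => ∫⁻ y in ball q.2 r, F y q.1 ∂μ := by
  have h : ∀ q : T × X, ∫⁻ y in ball q.2 r, F y q.1 ∂μ
      = ∫⁻ y, (if dist y q.2 < r then F y q.1 else 0) ∂μ := fun q => by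
    rw [← lintegral_indicator measurableSet_ball]
    simp only [Set.indicator, mem_ball]
  simp only [h]
  refine Measurable.lintegral_prod_right (Measurable.ite ?_ ?_ measurable_const)
  · exact measurableSet_lt (measurable_snd.dist measurable_fst.snd) measurable_const
  · exact hF.comp (measurable_snd.prodMk measurable_fst.fst)

theorem lintegral_setLIntegral_ball_mul_comm {W F : X → ℝ≥0∞} (hW : Measurable W)
    (hF : Measurable F) :
    ∫⁻ y, (∫⁻ x in ball y r, W x ∂μ) * F y ∂μ = ∫⁻ x, W x * ∫⁻ y in ball x r, F y ∂μ ∂μ := by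
  have hψ : Measurable fun p : X × X => if dist p.2 p.1 < r then W p.2 * F p.1 else 0 :=
    Measurable.ite (measurableSet_lt (measurable_snd.dist measurable_fst) measurable_const)
      ((hW.comp measurable_snd).mul (hF.comp measurable_fst)) measurable_const
  calc ∫⁻ y, (∫⁻ x in ball y r, W x ∂μ) * F y ∂μ
      = ∫⁻ y, ∫⁻ x, (if dist x y < r then W x * F y else 0) ∂μ ∂μ := by
        refine lintegral_congr fun y => ?_
        rw [← lintegral_mul_const _ hW, ← lintegral_indicator measurableSet_ball]
        simp only [Set.indicator, mem_ball]
    _ = ∫⁻ x, ∫⁻ y, (if dist x y < r then W x * F y else 0) ∂μ ∂μ :=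
        lintegral_lintegral_swap hψ.aemeasurable
    _ = ∫⁻ x, W x * ∫⁻ y in ball x r, F y ∂μ ∂μ := by
        refine lintegral_congr fun x => ?_
        rw [← lintegral_const_mul _ hF, ← lintegral_indicator measurableSet_ball]
        simp only [Set.indicator, mem_ball, dist_comm]

theorem lintegral_lintegral_setLIntegral_ball_mul_comm {ν : Measure T} [SFinite ν]
    {W : X → ℝ≥0∞} {F : X → T → ℝ≥0∞} (hW : Measurable W)
    (hF : Measurable (Function.uncurry F)) :
    ∫⁻ s, ∫⁻ y, (∫⁻ x in ball y r, W x ∂μ) * F y s ∂μ ∂ν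
      = ∫⁻ x, W x * ∫⁻ s, ∫⁻ y in ball x r, F y s ∂μ ∂ν ∂μ := by
  have hG := measurable_setLIntegral_ball (μ := μ) (r := r) hF
  calc ∫⁻ s, ∫⁻ y, (∫⁻ x in ball y r, W x ∂μ) * F y s ∂μ ∂ν
      = ∫⁻ s, ∫⁻ x, W x * ∫⁻ y in ball x r, F y s ∂μ ∂μ ∂ν :=
        lintegral_congr fun s =>
          lintegral_setLIntegral_ball_mul_comm hW (hF.comp measurable_prodMk_right)
    _ = ∫⁻ x, ∫⁻ s, W x * ∫⁻ y in ball x r, F y s ∂μ ∂ν ∂μ :=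
        lintegral_lintegral_swap ((hW.comp measurable_snd).mul hG).aemeasurable
    _ = ∫⁻ x, W x * ∫⁻ s, ∫⁻ y in ball x r, F y s ∂μ ∂ν ∂μ :=
        lintegral_congr fun x => lintegral_const_mul _ (hG.comp measurable_prodMk_right)

end BallSwap

theorem ofReal_setIntegral_setIntegral_abs {X T : Type*} [MeasurableSpace X] [MeasurableSpace T]
    {μ : Measure X} {ν : Measure T} [SFinite μ] {g : X → T → ℝ}
    (hg : Measurable (Function.uncurry g)) {M : ℝ} (hM : ∀ y s, |g y s| ≤ M)
    {A : Set X} {I : Set T} (hA : μ A ≠ ∞) (hI : ν I ≠ ∞) :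
    ENNReal.ofReal (∫ s in I, ∫ y in A, |g y s| ∂μ ∂ν) = ∫⁻ s in I, ∫⁻ y in A, ‖g y s‖ₑ ∂μ ∂ν := by
  have hinner : ∀ s, IntegrableOn (fun y => g y s) A μ := fun s =>
    Measure.integrableOn_of_bounded hA (hg.comp measurable_prodMk_right).aestronglyMeasurable
      (ae_of_all _ fun y => hM y s)
  have houter : IntegrableOn (fun s => ∫ y in A, |g y s| ∂μ) I ν := by
    refine Measure.integrableOn_of_bounded hI ?_ (M := M * μ.real A) (ae_of_all _ fun s => ?_)
    · exact (StronglyMeasurable.integral_prod_right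
        (hg.comp measurable_swap).abs.stronglyMeasurable).aestronglyMeasurable
    · exact norm_setIntegral_le_of_norm_le_const hA.lt_top fun y _ => (abs_abs _).trans_le (hM y s)
  rw [ofReal_integral_eq_lintegral_ofReal houter
    (ae_of_all _ fun s => integral_nonneg fun y => abs_nonneg _)]
  exact lintegral_congr fun s => ofReal_integral_norm_eq_lintegral_enorm (hinner s)

theorem rpow_neg_norm_sub_le {E : Type*} [SeminormedAddCommGroup E] {p : ℝ} (hp : 0 ≤ p)
    {x₀ y x : E} (hx₀ : ‖x₀‖ < 1) (hy : 2 ≤ ‖y‖) (hx : dist x y < 1) :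
    ‖x₀ - y‖ ^ (-p) ≤ 3 ^ p * (1 + ‖x - x₀‖) ^ (-p) := by
  have hd : 1 ≤ ‖x₀ - y‖ := by
    linarith [norm_sub_norm_le y x₀, norm_sub_rev y x₀]
  have hx' : 1 + ‖x - x₀‖ ≤ 3 * ‖x₀ - y‖ := by
    linarith [norm_sub_le_norm_sub_add_norm_sub x y x₀, norm_sub_rev y x₀, dist_eq_norm x y]
  calc ‖x₀ - y‖ ^ (-p) = 3 ^ p * (3 * ‖x₀ - y‖) ^ (-p) := by
        rw [mul_rpow (by norm_num) (by positivity), rpow_neg (by norm_num : (0 : ℝ) ≤ 3),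
          ← mul_assoc, mul_inv_cancel₀ (by positivity), one_mul]
    _ ≤ 3 ^ p * (1 + ‖x - x₀‖) ^ (-p) := mul_le_mul_of_nonneg_left
        (rpow_le_rpow_of_nonpos (by positivity) hx' (neg_nonpos.2 hp)) (by positivity)

section HaarMeasure

variable {E : Type*} [NormedAddCommGroup E] [NormedSpace ℝ E] [MeasurableSpace E] [BorelSpace E]
  [FiniteDimensional ℝ E] (μ : Measure E) [μ.IsAddHaarMeasure]

theorem enorm_le_mul_setLIntegral_ball {C p a t k : ℝ} (hC : 0 ≤ C) (hp : 0 ≤ p) (ht : 0 ≤ t)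
    {x₀ y : E} (hx₀ : ‖x₀‖ < 1) (hy : 2 ≤ ‖y‖) (hk : |k| ≤ C * (t ^ a + ‖x₀ - y‖) ^ (-p)) :
    ‖k‖ₑ ≤ ENNReal.ofReal (C * 3 ^ p) * (μ (ball 0 1))⁻¹ *
      ∫⁻ x in ball y 1, ENNReal.ofReal ((1 + ‖x - x₀‖) ^ (-p)) ∂μ := by
  have hd : 0 < ‖x₀ - y‖ := by linarith [norm_sub_norm_le y x₀, norm_sub_rev y x₀]
  have hk' : |k| ≤ C * ‖x₀ - y‖ ^ (-p) := hk.trans <| mul_le_mul_of_nonneg_left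
    (rpow_le_rpow_of_nonpos hd (le_add_of_nonneg_left (rpow_nonneg ht a)) (neg_nonpos.2 hp)) hC
  have havg : ENNReal.ofReal (‖x₀ - y‖ ^ (-p)) * μ (ball 0 1)
      ≤ ENNReal.ofReal (3 ^ p) * ∫⁻ x in ball y 1, ENNReal.ofReal ((1 + ‖x - x₀‖) ^ (-p)) ∂μ := by
    rw [← Measure.addHaar_ball_center μ y, ← setLIntegral_const,
      ← lintegral_const_mul' _ _ ENNReal.ofReal_ne_top]
    refine setLIntegral_mono' measurableSet_ball fun x hx => ?_
    rw [← ENNReal.ofReal_mul (by positivity)]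
    exact ENNReal.ofReal_le_ofReal (rpow_neg_norm_sub_le hp hx₀ hy hx)
  have hV : μ (ball 0 1) ≠ 0 := (measure_ball_pos μ 0 one_pos).ne'
  calc ‖k‖ₑ ≤ ENNReal.ofReal C * ENNReal.ofReal (‖x₀ - y‖ ^ (-p)) := by
        rw [enorm_eq_ofReal_abs, ← ENNReal.ofReal_mul hC]
        exact ENNReal.ofReal_le_ofReal hk'
    _ ≤ ENNReal.ofReal C * (ENNReal.ofReal (3 ^ p) *
          (∫⁻ x in ball y 1, ENNReal.ofReal ((1 + ‖x - x₀‖) ^ (-p)) ∂μ) / μ (ball 0 1)) := by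
        gcongr
        exact (ENNReal.le_div_iff_mul_le (Or.inl hV) (Or.inl measure_ball_lt_top.ne)).2 havg
    _ = _ := by rw [ENNReal.ofReal_mul hC, div_eq_mul_inv]; ring

theorem setLIntegral_Ioo_setLIntegral_ball_le_iSup {f : E → ℝ → ℝ}
    (hf : Measurable (Function.uncurry f)) {M : ℝ} (hM : ∀ y s, |f y s| ≤ M) {t₀ : ℝ}
    (ht₀ : t₀ ≤ 1) (x : E) :
    ∫⁻ s in Set.Ioo 0 t₀, ∫⁻ y in ball x 1, ‖f y s‖ₑ ∂μ
      ≤ ENNReal.ofReal (⨆ x, ∫ s in (0 : ℝ)..1, ∫ y in ball x 1, |f y s| ∂μ) := by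
  have hbdd : BddAbove (Set.range fun x => ∫ s in (0 : ℝ)..1, ∫ y in ball x 1, |f y s| ∂μ) := by
    refine ⟨M * μ.real (ball 0 1), ?_⟩
    rintro _ ⟨x, rfl⟩
    refine (le_norm_self _).trans
      ((intervalIntegral.norm_integral_le_of_norm_le_const (C := M * μ.real (ball 0 1))
        fun s _ => ?_).trans_eq ?_)
    · rw [← Measure.addHaar_real_ball_center μ x]
      exact norm_setIntegral_le_of_norm_le_const measure_ball_lt_top
        fun y _ => (abs_abs _).trans_le (hM y s)
    · norm_num
  calc ∫⁻ s in Set.Ioo 0 t₀, ∫⁻ y in ball x 1, ‖f y s‖ₑ ∂μ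
      ≤ ∫⁻ s in Set.Ioc 0 1, ∫⁻ y in ball x 1, ‖f y s‖ₑ ∂μ :=
        lintegral_mono_set (Set.Ioo_subset_Ioc_self.trans (Set.Ioc_subset_Ioc_right ht₀))
    _ = ENNReal.ofReal (∫ s in Set.Ioc 0 1, ∫ y in ball x 1, |f y s| ∂μ) :=
        (ofReal_setIntegral_setIntegral_abs hf hM measure_ball_lt_top.ne
          measure_Ioc_lt_top.ne).symm
    _ ≤ _ := by
        rw [← integral_of_le zero_le_one]
        exact ENNReal.ofReal_le_ofReal (le_ciSup hbdd x)

theorem enorm_intervalIntegral_kernel_mul_le {K f : E → ℝ → ℝ} {C p a M t₀ : ℝ} (hC : 0 ≤ C)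
    (hp : 0 ≤ p) (hK : ∀ x t, 0 < t → t ≤ 1 → |K x t| ≤ C * (t ^ a + ‖x‖) ^ (-p))
    (hf : Measurable (Function.uncurry f)) (hM : ∀ y s, |f y s| ≤ M)
    (hsupp : ∀ y s, ‖y‖ < 2 → f y s = 0) {x₀ : E} (hx₀ : ‖x₀‖ < 1) (ht₀ : 0 ≤ t₀)
    (ht₀1 : t₀ ≤ 1) :
    ‖∫ s in (0 : ℝ)..t₀, ∫ y, K (x₀ - y) (t₀ - s) * f y s ∂μ‖ₑ
      ≤ ENNReal.ofReal (C * 3 ^ p) * (μ (ball 0 1))⁻¹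
          * (∫⁻ x, ENNReal.ofReal ((1 + ‖x‖) ^ (-p)) ∂μ)
          * ENNReal.ofReal (⨆ x, ∫ s in (0 : ℝ)..1, ∫ y in ball x 1, |f y s| ∂μ) := by
  set c := ENNReal.ofReal (C * 3 ^ p) * (μ (ball 0 1))⁻¹
  have hc : c ≠ ∞ := ENNReal.mul_ne_top ENNReal.ofReal_ne_top
    (ENNReal.inv_ne_top.2 (measure_ball_pos μ 0 one_pos).ne')
  set w : E → ℝ≥0∞ := fun x => ENNReal.ofReal ((1 + ‖x - x₀‖) ^ (-p))
  have hpt : ∀ s ∈ Set.Ioo 0 t₀, ∀ y,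
      ‖K (x₀ - y) (t₀ - s) * f y s‖ₑ ≤ c * ((∫⁻ x in ball y 1, w x ∂μ) * ‖f y s‖ₑ) := by
    intro s hs y
    rw [enorm_mul, ← mul_assoc]
    by_cases hy : ‖y‖ < 2
    · simp [hsupp y s hy]
    · exact mul_le_mul_left (enorm_le_mul_setLIntegral_ball μ hC hp (by linarith [hs.2]) hx₀
        (not_lt.1 hy) (hK _ _ (by linarith [hs.2]) (by linarith [hs.1]))) _
  calc ‖∫ s in (0 : ℝ)..t₀, ∫ y, K (x₀ - y) (t₀ - s) * f y s ∂μ‖ₑ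
      ≤ ∫⁻ s in Set.Ioo 0 t₀, ∫⁻ y, ‖K (x₀ - y) (t₀ - s) * f y s‖ₑ ∂μ := by
        rw [integral_of_le ht₀, setLIntegral_congr Ioo_ae_eq_Ioc]
        exact (enorm_integral_le_lintegral_enorm _).trans
          (lintegral_mono fun s => enorm_integral_le_lintegral_enorm _)
    _ ≤ ∫⁻ s in Set.Ioo 0 t₀, c * ∫⁻ y, (∫⁻ x in ball y 1, w x ∂μ) * ‖f y s‖ₑ ∂μ := by
        refine setLIntegral_mono' measurableSet_Ioo fun s hs => ?_
        rw [← lintegral_const_mul' _ _ hc]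
        exact lintegral_mono (hpt s hs)
    _ = c * ∫⁻ x, w x * (∫⁻ s in Set.Ioo 0 t₀, ∫⁻ y in ball x 1, ‖f y s‖ₑ ∂μ) ∂μ := by
        rw [lintegral_const_mul' _ _ hc,
          lintegral_lintegral_setLIntegral_ball_mul_comm (by fun_prop) hf.enorm]
    _ ≤ c * ∫⁻ x, w x *
          ENNReal.ofReal (⨆ x, ∫ s in (0 : ℝ)..1, ∫ y in ball x 1, |f y s| ∂μ) ∂μ := by
        gcongr with x
        exact setLIntegral_Ioo_setLIntegral_ball_le_iSup μ hf hM ht₀1 x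
    _ = _ := by
        rw [lintegral_mul_const _ (by fun_prop),
          lintegral_sub_right_eq_self (fun x => ENNReal.ofReal ((1 + ‖x‖) ^ (-p))), mul_assoc c]

end HaarMeasure

theorem stmt_9_general (n : ℕ) (α : ℝ)
    (C : ℝ) (hC : 0 ≤ C) :
    ∃ C' : ℝ, 0 < C' ∧
      ∀ (K : EuclideanSpace ℝ (Fin n) → ℝ → ℝ)
        (f : EuclideanSpace ℝ (Fin n) → ℝ → ℝ) (M : ℝ),
        (∀ x t, 0 < t → t ≤ 1 → |K x t| ≤ C * (t ^ (1/(2*α)) + ‖x‖) ^ (-(n : ℝ) - 1)) →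
        Measurable (Function.uncurry f) →
        (∀ y s, |f y s| ≤ M) →
        (∀ y s, ‖y‖ < 2 → f y s = 0) →
        ∀ (x₀ : EuclideanSpace ℝ (Fin n)) (t₀ : ℝ), ‖x₀‖ < 1 → 0 < t₀ → t₀ ≤ 1 →
          |∫ s in (0:ℝ)..t₀, ∫ y, K (x₀ - y) (t₀ - s) * f y s|
            ≤ C' * ⨆ x : EuclideanSpace ℝ (Fin n),
                ∫ s in (0:ℝ)..1, ∫ y in ball x 1, |f y s| := by
  set p : ℝ := n + 1
  set Λ : ℝ≥0∞ := ENNReal.ofReal (C * 3 ^ p) * (volume (ball (0 : EuclideanSpace ℝ (Fin n)) 1))⁻¹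
    * ∫⁻ x : EuclideanSpace ℝ (Fin n), ENNReal.ofReal ((1 + ‖x‖) ^ (-p))
  have hΛ : Λ ≠ ∞ := ENNReal.mul_ne_top (ENNReal.mul_ne_top ENNReal.ofReal_ne_top
    (ENNReal.inv_ne_top.2 (measure_ball_pos _ _ one_pos).ne'))
    (integrable_one_add_norm (by simp [p])).lintegral_lt_top.ne
  refine ⟨Λ.toReal + 1, by positivity, fun K f M hK hf hM hsupp x₀ t₀ hx₀ ht₀ ht₀1 => ?_⟩
  set S := ⨆ x : EuclideanSpace ℝ (Fin n), ∫ s in (0:ℝ)..1, ∫ y in ball x 1, |f y s|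
  have hS : 0 ≤ S := Real.iSup_nonneg fun x =>
    integral_nonneg zero_le_one fun s _ => integral_nonneg fun y => abs_nonneg _
  have hK_decay : ∀ x t, 0 < t → t ≤ 1 → |K x t| ≤ C * (t ^ (1/(2*α)) + ‖x‖) ^ (-p) := by
    simpa only [p, neg_add'] using hK
  calc |∫ s in (0:ℝ)..t₀, ∫ y, K (x₀ - y) (t₀ - s) * f y s|
      ≤ (Λ * ENNReal.ofReal S).toReal := by
        rw [← ENNReal.ofReal_le_iff_le_toReal (ENNReal.mul_ne_top hΛ ENNReal.ofReal_ne_top),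
          ← Real.norm_eq_abs, ofReal_norm]
        exact enorm_intervalIntegral_kernel_mul_le volume hC (by positivity) hK_decay hf hM hsupp
          hx₀ ht₀.le ht₀1
    _ = Λ.toReal * S := by rw [ENNReal.toReal_mul, ENNReal.toReal_ofReal hS]
    _ ≤ (Λ.toReal + 1) * S := by gcongr; linarith

/-- Localization estimate: the far-field contribution of a space-time convolution
against a kernel with Poisson-type decay `(t^{1/(2α)}+|x|)^{-(n+1)}` is controlled by
local `L¹` averages of `f` on unit parabolic cylinders. -/
theorem stmt_9 (n : ℕ) (hn : 1 ≤ n) (α : ℝ) (hα : 1/2 < α) (hα' : α < 1)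
    (C : ℝ) (hC : 0 ≤ C) :
    ∃ C' : ℝ, 0 < C' ∧
      ∀ (K : EuclideanSpace ℝ (Fin n) → ℝ → ℝ)
        (f : EuclideanSpace ℝ (Fin n) → ℝ → ℝ) (M : ℝ),
        (∀ x t, 0 < t → t ≤ 1 → |K x t| ≤ C * (t ^ (1/(2*α)) + ‖x‖) ^ (-(n : ℝ) - 1)) →
        Measurable (Function.uncurry f) →
        (∀ y s, |f y s| ≤ M) →
        (∀ y s, ‖y‖ < 2 → f y s = 0) →
        ∀ (x₀ : EuclideanSpace ℝ (Fin n)) (t₀ : ℝ), ‖x₀‖ < 1 → 0 < t₀ → t₀ ≤ 1 →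
          |∫ s in (0:ℝ)..t₀, ∫ y, K (x₀ - y) (t₀ - s) * f y s|
            ≤ C' * ⨆ x : EuclideanSpace ℝ (Fin n),
                ∫ s in (0:ℝ)..1, ∫ y in ball x 1, |f y s| :=
  stmt_9_general n α C hC
end

section
/- Let $K : \mathbb{R}^n \times (0,\infty) \to \mathbb{R}$ satisfy $|K(x,t)| \leq C(t^{1/(2\alpha)}+|x|)^{-(n+1)}$ with $\alpha \in (1/2,1)$, and let $f$ be supported in $B(0,2) \times [0,1]$ with $\|f\|_{GY} = \sup_{t>0} t^{2-1/\alpha}\|f(\cdot,t)\|_{L^\infty} < \infty$. Then $\big|\int_0^1 \int_{\mathbb{R}^n} K(-y, 1-s) f(y,s)\, dy\, ds\big| \leq C' \|f\|_{GY}$, where $C'$ depends only on $n, \alpha, C$. -/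
/-!
Fix `s ∈ (0,1)`. The `GY` norm bounds `|f(·,s)|` by `‖f‖_{GY} s^{-(2-1/α)}`, and the substitution
`y = ε z` with `ε = (1-s)^{1/(2α)}` gives `∫ (ε + |y|)^{-(n+1)} dy = ε^{-1} ∫ (1 + |z|)^{-(n+1)} dz`,
so the inner integral is at most a constant times `‖f‖_{GY} s^{-(2-1/α)} (1-s)^{-1/(2α)}`.
Since `1/2 < α < 1`, both exponents exceed `-1`, and the time integral is a convergent Beta integral.
-/

open MeasureTheory Real Metric intervalIntegral
open scoped ENNReal

/-- The `GY` norm `‖f‖_{GY} = sup_{t>0} t^{2-1/α} ‖f(·,t)‖_{L^∞}`. -/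
noncomputable def GYnorm (n : ℕ) (α : ℝ)
    (f : EuclideanSpace ℝ (Fin n) → ℝ → ℝ) : ℝ≥0∞ :=
  ⨆ (t : ℝ) (_ : 0 < t),
    ENNReal.ofReal (t ^ (2 - 1/α)) *
      ⨆ y : EuclideanSpace ℝ (Fin n), (‖f y t‖₊ : ℝ≥0∞)

lemma abs_le_GYnorm_toReal_div {n : ℕ} {α : ℝ} {f : EuclideanSpace ℝ (Fin n) → ℝ → ℝ}
    (hf : GYnorm n α f ≠ ⊤) {s : ℝ} (hs : 0 < s) (y : EuclideanSpace ℝ (Fin n)) :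
    |f y s| ≤ (GYnorm n α f).toReal / s ^ (2 - 1/α) := by
  have hle : ENNReal.ofReal (s ^ (2 - 1/α)) * (‖f y s‖₊ : ℝ≥0∞) ≤ GYnorm n α f :=
    le_iSup₂_of_le s hs (mul_le_mul_right (le_iSup (fun y' => (‖f y' s‖₊ : ℝ≥0∞)) y) _)
  have hle' := ENNReal.toReal_mono hf hle
  rw [ENNReal.toReal_mul, ENNReal.toReal_ofReal (by positivity), ENNReal.coe_toReal,
    coe_nnnorm, Real.norm_eq_abs] at hle'
  rwa [le_div_iff₀' (by positivity)]

lemma intervalIntegrable_rpow_mul_one_sub_rpow {a b : ℝ} (ha : -1 < a) (hb : -1 < b) :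
    IntervalIntegrable (fun s : ℝ => s ^ a * (1 - s) ^ b) volume 0 1 := by
  have hbeta := (Complex.betaIntegral_convergent (u := a + 1) (v := b + 1)
    (by rw [Complex.add_re, Complex.ofReal_re, Complex.one_re]; linarith)
    (by rw [Complex.add_re, Complex.ofReal_re, Complex.one_re]; linarith)).norm
  refine hbeta.congr_uIoo fun s hs => ?_
  rw [Set.uIoo_of_le zero_le_one] at hs
  have h1s : 0 < 1 - s := by linarith [hs.2]
  dsimp only
  simp only [norm_mul, Complex.norm_cpow_eq_rpow_re_of_pos hs.1]
  rw [← Complex.ofReal_one, ← Complex.ofReal_sub, Complex.norm_cpow_eq_rpow_re_of_pos h1s]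
  simp

lemma rpow_neg_add_norm_eq {E : Type*} [NormedAddCommGroup E] [NormedSpace ℝ E] {ε : ℝ}
    (hε : 0 < ε) (r : ℝ) (y : E) :
    (ε + ‖y‖) ^ (-r) = ε ^ (-r) * (1 + ‖ε⁻¹ • y‖) ^ (-r) := by
  rw [← Real.mul_rpow hε.le (by positivity), norm_smul, Real.norm_of_nonneg (inv_pos.2 hε).le,
    mul_add, mul_one, mul_inv_cancel_left₀ hε.ne']

section AddHaar

variable {E : Type*} [NormedAddCommGroup E] [NormedSpace ℝ E] [FiniteDimensional ℝ E]
  [MeasurableSpace E] [BorelSpace E] (μ : Measure E) [μ.IsAddHaarMeasure] {ε : ℝ}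

open Module

lemma integrable_rpow_neg_add_norm (hε : 0 < ε) {r : ℝ} (hr : (finrank ℝ E : ℝ) < r) :
    Integrable (fun y : E => (ε + ‖y‖) ^ (-r)) μ := by
  simp_rw [rpow_neg_add_norm_eq hε]
  exact ((integrable_one_add_norm hr).comp_smul (inv_ne_zero hε.ne')).const_mul _

lemma integral_rpow_neg_add_norm (hε : 0 < ε) (r : ℝ) :
    ∫ y, (ε + ‖y‖) ^ (-r) ∂μ = ε ^ (finrank ℝ E - r) * ∫ y, (1 + ‖y‖) ^ (-r) ∂μ := by
  simp_rw [rpow_neg_add_norm_eq hε, MeasureTheory.integral_const_mul,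
    Measure.integral_comp_inv_smul_of_nonneg μ (fun y : E => (1 + ‖y‖) ^ (-r)) hε.le,
    smul_eq_mul, ← mul_assoc, ← Real.rpow_natCast, ← Real.rpow_add hε, neg_add_eq_sub]

lemma norm_integral_le_of_norm_le_rpow_neg_add_norm {F : Type*} [NormedAddCommGroup F]
    [NormedSpace ℝ F] {g : E → F} {A r : ℝ} (hε : 0 < ε) (hr : (finrank ℝ E : ℝ) < r)
    (hg : ∀ y, ‖g y‖ ≤ A * (ε + ‖y‖) ^ (-r)) :
    ‖∫ y, g y ∂μ‖ ≤ A * ε ^ (finrank ℝ E - r) * ∫ y, (1 + ‖y‖) ^ (-r) ∂μ := by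
  calc ‖∫ y, g y ∂μ‖ ≤ ∫ y, A * (ε + ‖y‖) ^ (-r) ∂μ :=
        norm_integral_le_of_norm_le ((integrable_rpow_neg_add_norm μ hε hr).const_mul A)
          (.of_forall hg)
    _ = _ := by rw [MeasureTheory.integral_const_mul, integral_rpow_neg_add_norm μ hε, mul_assoc]

end AddHaar

lemma norm_integral_kernel_mul_le {n : ℕ} {α C : ℝ} {K f : EuclideanSpace ℝ (Fin n) → ℝ → ℝ}
    (hK : ∀ x t, 0 < t → |K x t| ≤ C * (t ^ (1/(2*α)) + ‖x‖) ^ (-(n : ℝ) - 1))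
    (hf : GYnorm n α f ≠ ⊤) {s : ℝ} (hs : s ∈ Set.Ioo 0 1) :
    ‖∫ y, K (-y) (1 - s) * f y s‖ ≤
      C * (∫ y : EuclideanSpace ℝ (Fin n), (1 + ‖y‖) ^ (-((n : ℝ) + 1))) *
        (GYnorm n α f).toReal * (s ^ (-(2 - 1/α)) * (1 - s) ^ (-(1/(2*α)))) := by
  obtain ⟨hs0, hs1⟩ := hs
  have h1s : 0 < 1 - s := sub_pos.2 hs1
  have hε : 0 < (1 - s) ^ (1/(2*α)) := by positivity
  have hpt : ∀ y, ‖K (-y) (1 - s) * f y s‖ ≤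
      C * ((GYnorm n α f).toReal * s ^ (-(2 - 1/α))) *
        ((1 - s) ^ (1/(2*α)) + ‖y‖) ^ (-((n : ℝ) + 1)) := by
    intro y
    have hKy := hK (-y) (1 - s) h1s
    rw [norm_neg, ← neg_add'] at hKy
    rw [Real.norm_eq_abs, abs_mul, Real.rpow_neg hs0.le, ← div_eq_mul_inv]
    calc |K (-y) (1 - s)| * |f y s|
        ≤ C * ((1 - s) ^ (1/(2*α)) + ‖y‖) ^ (-((n : ℝ) + 1)) *
            ((GYnorm n α f).toReal / s ^ (2 - 1/α)) :=
          mul_le_mul hKy (abs_le_GYnorm_toReal_div hf hs0 y) (abs_nonneg _)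
            ((abs_nonneg _).trans hKy)
      _ = _ := by ring
  have hdim : (Module.finrank ℝ (EuclideanSpace ℝ (Fin n)) : ℝ) < n + 1 := by
    rw [finrank_euclideanSpace_fin]; linarith
  have hscale : ((1 - s) ^ (1/(2*α))) ^
      ((Module.finrank ℝ (EuclideanSpace ℝ (Fin n)) : ℝ) - (n + 1)) = (1 - s) ^ (-(1/(2*α))) := by
    rw [finrank_euclideanSpace_fin, ← Real.rpow_mul h1s.le]
    ring_nf
  refine (norm_integral_le_of_norm_le_rpow_neg_add_norm volume hε hdim hpt).trans_eq ?_
  rw [hscale]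
  ring

theorem stmt_13_general (n : ℕ) (α : ℝ) (hα : 1/2 < α) (hα' : α < 1)
    (C : ℝ) (hC : 0 ≤ C) :
    ∃ C' : ℝ, 0 < C' ∧
      ∀ (K : EuclideanSpace ℝ (Fin n) → ℝ → ℝ)
        (f : EuclideanSpace ℝ (Fin n) → ℝ → ℝ),
        (∀ x t, 0 < t → |K x t| ≤ C * (t ^ (1/(2*α)) + ‖x‖) ^ (-(n : ℝ) - 1)) →
        Measurable (Function.uncurry f) →
        (∀ y s, 2 ≤ ‖y‖ ∨ s < 0 ∨ 1 < s → f y s = 0) →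
        GYnorm n α f < ⊤ →
        |∫ s in (0:ℝ)..1, ∫ y : EuclideanSpace ℝ (Fin n), K (-y) (1 - s) * f y s|
          ≤ C' * (GYnorm n α f).toReal := by
  set I := ∫ y : EuclideanSpace ℝ (Fin n), (1 + ‖y‖) ^ (-((n : ℝ) + 1))
  set B := ∫ s in (0:ℝ)..1, s ^ (-(2 - 1/α)) * (1 - s) ^ (-(1/(2*α)))
  have hα0 : 0 < α := by linarith
  have hB_int : IntervalIntegrable (fun s : ℝ => s ^ (-(2 - 1/α)) * (1 - s) ^ (-(1/(2*α))))
      volume 0 1 := by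
    refine intervalIntegrable_rpow_mul_one_sub_rpow ?_ ?_
    · have : 1 < 1/α := by rw [lt_div_iff₀ hα0]; linarith
      linarith
    · have : 1/(2*α) < 1 := by rw [div_lt_one (by linarith)]; linarith
      linarith
  have hI : 0 ≤ I := integral_nonneg fun y => by positivity
  have hB : 0 ≤ B := intervalIntegral.integral_nonneg zero_le_one fun s hs =>
    mul_nonneg (rpow_nonneg hs.1 _) (rpow_nonneg (sub_nonneg.2 hs.2) _)
  refine ⟨C * I * B + 1, by positivity, fun K f hK _ _ hf => ?_⟩
  have hM : 0 ≤ (GYnorm n α f).toReal := ENNReal.toReal_nonneg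
  calc |∫ s in (0:ℝ)..1, ∫ y, K (-y) (1 - s) * f y s|
      ≤ ∫ s in (0:ℝ)..1, C * I * (GYnorm n α f).toReal *
          (s ^ (-(2 - 1/α)) * (1 - s) ^ (-(1/(2*α)))) := by
        rw [← Real.norm_eq_abs]
        refine norm_integral_le_of_norm_le zero_le_one ?_ (hB_int.const_mul _)
        filter_upwards [Measure.ae_ne volume 1] with s hs1 hs
        exact norm_integral_kernel_mul_le hK hf.ne ⟨hs.1, lt_of_le_of_ne hs.2 hs1⟩
    _ = C * I * B * (GYnorm n α f).toReal := by rw [intervalIntegral.integral_const_mul]; ring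
    _ ≤ (C * I * B + 1) * (GYnorm n α f).toReal := by gcongr; linarith

/-- Pointwise estimate (Step 3): for `f` supported in `B(0,2)×[0,1]` with finite
`GY` norm, the convolution against a kernel with Poisson-type decay is bounded by
`C' ‖f‖_{GY}`. -/
theorem stmt_13 (n : ℕ) (hn : 1 ≤ n) (α : ℝ) (hα : 1/2 < α) (hα' : α < 1)
    (C : ℝ) (hC : 0 ≤ C) :
    ∃ C' : ℝ, 0 < C' ∧
      ∀ (K : EuclideanSpace ℝ (Fin n) → ℝ → ℝ)
        (f : EuclideanSpace ℝ (Fin n) → ℝ → ℝ),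
        (∀ x t, 0 < t → |K x t| ≤ C * (t ^ (1/(2*α)) + ‖x‖) ^ (-(n : ℝ) - 1)) →
        Measurable (Function.uncurry f) →
        (∀ y s, 2 ≤ ‖y‖ ∨ s < 0 ∨ 1 < s → f y s = 0) →
        GYnorm n α f < ⊤ →
        |∫ s in (0:ℝ)..1, ∫ y : EuclideanSpace ℝ (Fin n), K (-y) (1 - s) * f y s|
          ≤ C' * (GYnorm n α f).toReal :=
  stmt_13_general n α hα hα' C hC
end
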